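/- Let Λ be a system of representatives for the conjugacy classes of the CM-types of K. Then Σ_{Φ∈Λ} Ind_{H̃₀(Φ)}^G(χ_{H̃₀(Φ)/H̃(Φ)}) = Σ_{I∈J_odd} Ind_{H₀^G(I)}^G(χ̃_I) as characters of G, where for I ⊆ G/H₀ with |I| odd, H₀^G(I) := {σ ∈ G : ρ(σ)I = I}, and χ̃_I is the character of H₀^G(I) given by σ ↦ (−1)^{Σ_{φH₀∈I} r_{Φ₀}(σ)(φH₀)}, whose kernel is H(I). -/

import Mathlib

/- Common combinatorial skeleton for the Galois-theoretic setting of the paper: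
`G = Gal(K^c/ℚ)`, `H = Gal(K^c/K)`, `H₀ = Gal(K^c/K₀)`, `ι` the complex conjugation.
Embeddings `K ↪ ℂ` correspond to left cosets `G ⧸ H`, embeddings `K₀ ↪ ℂ` to `G ⧸ H₀`. -/

open Pointwise
open scoped Classical

variable {G : Type} [Group G]

/-- A CM-type of `K`: a set `Φ` of embeddings `K ↪ ℂ` (i.e. of cosets in `G ⧸ H`) such that
`Φ` and `ιΦ` are disjoint and every embedding lies in `Φ ∪ ιΦ`. -/
def IsCMType (H : Subgroup G) (ι : G) (Φ : Set (G ⧸ H)) : Prop :=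
  (∀ φ ∈ Φ, ι • φ ∉ Φ) ∧ ∀ φ : G ⧸ H, φ ∈ Φ ∨ ι • φ ∈ Φ

/-- `S_Φ = ⋃_{φ ∈ Φ} φH ⊆ G`. -/
def SPhi (H : Subgroup G) (Φ : Set (G ⧸ H)) : Set G := {g : G | (g : G ⧸ H) ∈ Φ}

/-- `H̃(Φ) = {σ ∈ G : σ S_Φ = S_Φ}`. -/
def Htilde (H : Subgroup G) (Φ : Set (G ⧸ H)) : Subgroup G := MulAction.stabilizer G (SPhi H Φ)

/-- The natural projection `G ⧸ H → G ⧸ H₀` (restriction of embeddings of `K` to `K₀`). -/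
def proj (H H₀ : Subgroup G) (h : H ≤ H₀) : G ⧸ H → G ⧸ H₀ :=
  Quotient.map' id fun a b hab => by
    rw [QuotientGroup.leftRel_apply] at *
    exact h hab

open Classical in
/-- The 1-cocycle `r_Φ : G → Ind`, `r_Φ(τ)(φᵢH₀) = 0` iff `τ⁻¹φᵢ ∈ Φ`, where `φᵢ` is the
unique member of `Φ` lying over the coset `φᵢH₀`. -/
noncomputable def rPhi (H H₀ : Subgroup G) (h : H ≤ H₀) (Φ : Set (G ⧸ H)) (τ : G) :
    (G ⧸ H₀) → ZMod 2 :=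
  fun x => if ∃ φ ∈ Φ, proj H H₀ h φ = x ∧ τ⁻¹ • φ ∈ Φ then 0 else 1

/-- The action of `G` on `Ind = Map(G/H₀, ℤ/2ℤ)`, `(σ·f)(τH₀) = f(σ⁻¹τH₀)`. -/
def indAct (H₀ : Subgroup G) (σ : G) (f : (G ⧸ H₀) → ZMod 2) : (G ⧸ H₀) → ZMod 2 :=
  fun x => f (σ⁻¹ • x)

/-- For `f ∈ Ind`, the CM-type `Φ_f = {ι^{f(φ₁H₀)}φ₁, …, ι^{f(φ_NH₀)}φ_N}` attached to a fixed
CM-type `Φ₀`. -/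
noncomputable def PhiF (H H₀ : Subgroup G) (h : H ≤ H₀) (ι : G) (Φ₀ : Set (G ⧸ H))
    (f : (G ⧸ H₀) → ZMod 2) : Set (G ⧸ H) :=
  (fun φ => ι ^ (f (proj H H₀ h φ)).val • φ) '' Φ₀

/-- The `*`-action of `G` on `Ind`: `τ * f := r_{Φ₀}(τ) + τ·f`. -/
noncomputable def starAct (H H₀ : Subgroup G) (h : H ≤ H₀) (Φ₀ : Set (G ⧸ H)) (τ : G)
    (f : (G ⧸ H₀) → ZMod 2) : (G ⧸ H₀) → ZMod 2 :=
  rPhi H H₀ h Φ₀ τ + indAct H₀ τ f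

/-- Induced character `Ind_U^G(χ)` of a class-function-style character `χ` defined on
(a superset of) `U`, by the standard formula `(Ind_U^G χ)(g) = |U|⁻¹ ∑_{x∈G, x⁻¹gx∈U} χ(x⁻¹gx)`. -/
noncomputable def indChar {G : Type} [Group G] (U : Subgroup G) (χ : G → ℂ) (g : G) : ℂ :=
  (Nat.card U : ℂ)⁻¹ * ∑ᶠ x : G, if x⁻¹ * g * x ∈ U then χ (x⁻¹ * g * x) else 0

/-!
Both sides are evaluated at a fixed `g` as sums over fixed points. An induced character is a sum
over the orbit of the inducing object, so the left side is `½ ∑_Ψ ([gΨ = Ψ] - [gΨ = ιΨ])` over all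
CM-types `Ψ`, and the right side is `∑_J (-1)^{∑_J r(g)}` over all `g`-stable `J ⊆ G/H₀` of odd
size; for the latter, the cocycle identity of `r = r_{Φ₀}` turns `χ̃_I(x⁻¹gx)` into the sign of
`g` on `xI`.

On the left, `f ↦ Φ_f` is a bijection from `Ind` onto the CM-types with `τΦ_f = Φ_{τ*f}` and
`ιΦ_f = Φ_{f+1}`, which becomes transparent once `Φ_f` is described as the set of `ψ` with
`f(ψH₀) = parity Φ₀ ψ`. So the left side is half the number of solutions of `r(g) + g·f = f` minus
that of `r(g) + g·f = f + 1`. Fourier analysis on `(ℤ/2)^{G/H₀}` counts the solutions of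
`r(g) + g·f = f + c` as `∑_J (-1)^{∑_J (r(g) + c)}` over the `g`-stable `J`, and the difference of
the two counts keeps exactly twice the odd `J`.
-/

lemma zmod_two_eq_zero_or_eq_one (a : ZMod 2) : a = 0 ∨ a = 1 := by
  revert a; decide

def signChar : AddChar (ZMod 2) ℂ where
  toFun a := (-1) ^ a.val
  map_zero_eq_one' := rfl
  map_add_eq_mul' a b := by
    rw [ZMod.val_add, ← pow_add, neg_one_pow_eq_pow_mod_two (R := ℂ) (n := a.val + b.val)]

lemma signChar_apply (a : ZMod 2) : signChar a = (-1) ^ a.val := rfl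

lemma signChar_one : signChar 1 = -1 := by
  simp [signChar_apply, ZMod.val_one]

lemma signChar_natCast (n : ℕ) : signChar n = (-1) ^ n := by
  rw [signChar_apply, ZMod.val_natCast, ← neg_one_pow_eq_pow_mod_two]

section Fourier
variable {X : Type*} [Fintype X] [DecidableEq X] {M : Type*} [Group M] [MulAction M X]

lemma sum_signChar_sum_mul (u : X → ZMod 2) :
    ∑ f : X → ZMod 2, signChar (∑ x, f x * u x) = if u = 0 then 2 ^ Fintype.card X else 0 := by
  let pairing : (X → ZMod 2) →+ ZMod 2 :=
    { toFun f := ∑ x, f x * u x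
      map_zero' := by simp
      map_add' f f' := by simp [add_mul, Finset.sum_add_distrib] }
  have hψ : signChar.compAddMonoidHom pairing = 0 ↔ u = 0 := by
    refine ⟨fun h => funext fun x₀ => ?_, fun h => by ext f; simp [pairing, h]⟩
    refine (zmod_two_eq_zero_or_eq_one (u x₀)).resolve_right fun h1 => ?_
    have := DFunLike.congr_fun h (Pi.single x₀ 1)
    norm_num [pairing, h1, Pi.single_apply, signChar_one] at this
  have := (signChar.compAddMonoidHom pairing).sum_eq_ite
  simp only [hψ, AddChar.compAddMonoidHom_apply] at this
  simpa [pairing, Fintype.card_fun, ZMod.card] using this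

lemma sum_ite_add_comp_smul_eq_sum_signChar (g : M) (t : X → ZMod 2) :
    ∑ f : X → ZMod 2, (if t + (fun x => f (g⁻¹ • x)) = f then (1 : ℂ) else 0) =
      ∑ h : X → ZMod 2 with ∀ x, h (g • x) = h x, signChar (∑ x, t x * h x) := by
  have h2 : (2 : ℂ) ^ Fintype.card X ≠ 0 := pow_ne_zero _ two_ne_zero
  have char_two_eq {u v : X → ZMod 2} : (fun x => u x + v x) = 0 ↔ u = v := by
    simp only [funext_iff, Pi.zero_apply, CharTwo.add_eq_zero]
  apply mul_left_cancel₀ h2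
  calc (2 : ℂ) ^ Fintype.card X * ∑ f : X → ZMod 2,
          (if t + (fun x => f (g⁻¹ • x)) = f then (1 : ℂ) else 0)
      = ∑ f : X → ZMod 2, ∑ h : X → ZMod 2,
          signChar (∑ x, h x * ((t x + f (g⁻¹ • x)) + f x)) := by
        rw [Finset.mul_sum]
        refine Finset.sum_congr rfl fun f _ => ?_
        rw [sum_signChar_sum_mul, mul_ite, mul_one, mul_zero]
        exact if_congr char_two_eq.symm rfl rfl
    _ = ∑ h : X → ZMod 2, signChar (∑ x, t x * h x) *
          ∑ f : X → ZMod 2, signChar (∑ x, f x * (h (g • x) + h x)) := by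
        rw [Finset.sum_comm]
        refine Finset.sum_congr rfl fun h _ => ?_
        rw [Finset.mul_sum]
        refine Finset.sum_congr rfl fun f _ => ?_
        rw [← AddChar.map_add_eq_mul]
        congr 1
        -- the pairing `∑ f x * h x` makes `h ↦ h + h ∘ (g • ·)` adjoint to `f ↦ f + f ∘ (g⁻¹ • ·)`
        have reindex : ∑ x, h x * f (g⁻¹ • x) = ∑ x, h (g • x) * f x :=
          (Fintype.sum_equiv (MulAction.toPerm g) _ _ fun x => by simp).symm
        simp only [mul_add, Finset.sum_add_distrib, reindex]
        simp only [mul_comm (h _)]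
        ring
    _ = (2 : ℂ) ^ Fintype.card X *
          ∑ h : X → ZMod 2 with ∀ x, h (g • x) = h x, signChar (∑ x, t x * h x) := by
        rw [Finset.sum_filter, Finset.mul_sum]
        refine Finset.sum_congr rfl fun h _ => ?_
        rw [sum_signChar_sum_mul]
        simp only [char_two_eq, funext_iff]
        split_ifs <;> ring

lemma sum_invariant_fun_eq_sum_invariant_finset (g : M) (t : X → ZMod 2) :
    ∑ h : X → ZMod 2 with ∀ x, h (g • x) = h x, signChar (∑ x, t x * h x) =
      ∑ J : Finset X with g • J = J, signChar (∑ x ∈ J, t x) := by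
  symm
  refine Finset.sum_nbij' (fun J x => if x ∈ J then 1 else 0) (fun h => ({x | h x = 1} : Finset X))
    ?_ ?_ ?_ ?_ ?_
  · intro J hJ
    simp only [Finset.mem_filter, Finset.mem_univ, true_and] at hJ ⊢
    intro x
    have hx := Finset.smul_mem_smul_finset_iff (s := J) (b := x) g
    rw [hJ] at hx
    simp only [hx]
  · intro h hh
    simp only [Finset.mem_filter, Finset.mem_univ, true_and] at hh ⊢
    ext y
    rw [← Finset.inv_smul_mem_iff]
    simp only [Finset.mem_filter, Finset.mem_univ, true_and]
    rw [← hh (g⁻¹ • y), smul_inv_smul]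
  · intro J _
    ext x
    by_cases hx : x ∈ J <;> simp [hx]
  · intro h _
    funext x
    rcases zmod_two_eq_zero_or_eq_one (h x) with hx | hx <;> simp [hx]
  · intro J _
    simp [mul_ite, Finset.sum_ite_mem]

lemma sum_ite_sub_sum_ite_eq_two_mul_sum_odd (g : M) (t : X → ZMod 2) :
    (∑ f : X → ZMod 2, (if t + (fun x => f (g⁻¹ • x)) = f then (1 : ℂ) else 0)) -
      ∑ f : X → ZMod 2, (if t + (fun x => f (g⁻¹ • x)) = f + 1 then (1 : ℂ) else 0) =
      2 * ∑ J : Finset X with g • J = J ∧ Odd J.card, signChar (∑ x ∈ J, t x) := by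
  have shift (f : X → ZMod 2) :
      t + (fun x => f (g⁻¹ • x)) = f + 1 ↔ (t + 1) + (fun x => f (g⁻¹ • x)) = f := by
    rw [add_right_comm, ← sub_eq_iff_eq_add, sub_eq_add_neg]
    simp only [funext_iff, Pi.add_apply, Pi.neg_apply, Pi.one_apply, ZMod.neg_eq_self_mod_two]
  simp only [shift]
  rw [sum_ite_add_comp_smul_eq_sum_signChar, sum_ite_add_comp_smul_eq_sum_signChar,
    sum_invariant_fun_eq_sum_invariant_finset, sum_invariant_fun_eq_sum_invariant_finset,
    ← Finset.sum_sub_distrib, ← Finset.filter_filter,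
    Finset.sum_filter _ (p := fun J : Finset X => Odd J.card), Finset.mul_sum]
  refine Finset.sum_congr rfl fun J _ => ?_
  have hsum : ∑ x ∈ J, (t + 1) x = ∑ x ∈ J, t x + (J.card : ZMod 2) := by
    simp [Finset.sum_add_distrib]
  rw [hsum, AddChar.map_add_eq_mul, signChar_natCast]
  rcases Nat.even_or_odd J.card with hJ | hJ
  · rw [if_neg (Nat.not_odd_iff_even.2 hJ), hJ.neg_one_pow]; ring
  · rw [if_pos hJ, hJ.neg_one_pow]; ring

end Fourier

section Orbits
open MulAction
variable {G : Type} {β : Type*} [Group G] [MulAction G β]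

lemma conj_smul_eq_iff (x g : G) (b c : β) : (x⁻¹ * g * x) • b = c ↔ g • x • b = x • c := by
  rw [mul_assoc, mul_smul, inv_smul_eq_iff, mul_smul]

lemma card_filter_smul_eq [Fintype G] {b c : β} (hc : c ∈ orbit G b) :
    (Finset.univ.filter fun x : G => x • b = c).card = Nat.card (stabilizer G b) := by
  obtain ⟨y, rfl⟩ := hc
  rw [Nat.card_eq_fintype_card, Fintype.card_subtype]
  refine Finset.card_bij' (fun x _ => y⁻¹ * x) (fun x _ => y * x) ?_ ?_ ?_ ?_ <;>
    simp [mul_smul, inv_smul_eq_iff]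

lemma sum_smul_eq_card_stabilizer_mul [Fintype G] [Fintype β] (b : β) (F : β → ℂ) :
    ∑ x : G, F (x • b) = Nat.card (stabilizer G b) * ∑ c ∈ (orbit G b).toFinset, F c := by
  rw [← Finset.sum_fiberwise_of_maps_to (g := (· • b)) (t := (orbit G b).toFinset)
    (fun x _ => by simp [mem_orbit]), Finset.mul_sum]
  refine Finset.sum_congr rfl fun c hc => ?_
  rw [Finset.sum_congr rfl fun x hx => by rw [(Finset.mem_filter.1 hx).2], Finset.sum_const,
    card_filter_smul_eq (Set.mem_toFinset.1 hc), nsmul_eq_mul]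

lemma indChar_eq_mul_sum_orbit [Finite G] [Fintype β] (U : Subgroup G) (χ : G → ℂ) (g : G)
    (b : β) (F : β → ℂ)
    (hF : ∀ x : G, (if x⁻¹ * g * x ∈ U then χ (x⁻¹ * g * x) else 0) = F (x • b)) :
    indChar U χ g = Nat.card (stabilizer G b) / Nat.card U * ∑ c ∈ (orbit G b).toFinset, F c := by
  have := Fintype.ofFinite G
  rw [indChar, finsum_eq_sum_of_fintype, Finset.sum_congr rfl fun x _ => hF x,
    sum_smul_eq_card_stabilizer_mul]
  ring

lemma sum_sum_orbit_eq_sum_filter [Fintype β] (P : β → Prop) (Λ : Finset β)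
    (hP : ∀ (x : G) b, P b → P (x • b)) (hΛ : ∀ b ∈ Λ, P b)
    (hrep : ∀ c, P c → ∃ b ∈ Λ, ∃ x : G, c = x • b)
    (huniq : ∀ b ∈ Λ, ∀ b' ∈ Λ, (∃ x : G, b' = x • b) → b = b') (F : β → ℂ) :
    ∑ b ∈ Λ, ∑ c ∈ (orbit G b).toFinset, F c = ∑ c with P c, F c := by
  rw [← Finset.sum_biUnion]
  · congr 1
    ext c
    simp only [Finset.mem_biUnion, Set.mem_toFinset, mem_orbit_iff, Finset.mem_filter,
      Finset.mem_univ, true_and]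
    constructor
    · rintro ⟨b, hb, x, rfl⟩
      exact hP x b (hΛ b hb)
    · intro hc
      obtain ⟨b, hb, x, rfl⟩ := hrep c hc
      exact ⟨b, hb, x, rfl⟩
  · intro b hb b' hb' hne
    refine Finset.disjoint_left.2 fun c hc hc' => hne ?_
    simp only [Set.mem_toFinset, mem_orbit_iff] at hc hc'
    obtain ⟨x, rfl⟩ := hc
    obtain ⟨x', hx'⟩ := hc'
    exact huniq b hb b' hb' ⟨x'⁻¹ * x, by rw [mul_smul, ← hx', inv_smul_smul]⟩

lemma sum_indChar_eq_sum_filter [Finite G] [Fintype β] (P : β → Prop) (Λ : Finset β)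
    (hP : ∀ (x : G) b, P b → P (x • b)) (hΛ : ∀ b ∈ Λ, P b)
    (hrep : ∀ c, P c → ∃ b ∈ Λ, ∃ x : G, c = x • b)
    (huniq : ∀ b ∈ Λ, ∀ b' ∈ Λ, (∃ x : G, b' = x • b) → b = b')
    (U : β → Subgroup G) (k : ℕ) (hk : k ≠ 0)
    (hU : ∀ b ∈ Λ, Nat.card (U b) = k * Nat.card (stabilizer G b))
    (χ : β → G → ℂ) (g : G) (F : β → ℂ)
    (hF : ∀ b ∈ Λ, ∀ x : G,
      (if x⁻¹ * g * x ∈ U b then χ b (x⁻¹ * g * x) else 0) = F (x • b)) :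
    ∑ b ∈ Λ, indChar (U b) (χ b) g = (k : ℂ)⁻¹ * ∑ c with P c, F c := by
  rw [← sum_sum_orbit_eq_sum_filter P Λ hP hΛ hrep huniq, Finset.mul_sum]
  refine Finset.sum_congr rfl fun b hb => ?_
  have hstab : (Nat.card (stabilizer G b) : ℂ) ≠ 0 := Nat.cast_ne_zero.2 Nat.card_pos.ne'
  rw [indChar_eq_mul_sum_orbit (U b) (χ b) g b F (hF b hb), hU b hb, Nat.cast_mul]
  field_simp

end Orbits

section Cocycle
variable {G X A : Type*} [Group G] [MulAction G X] [DecidableEq X] [AddCommGroup A]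

lemma Finset.sum_comp_smul_of_smul_eq {a : G} {I : Finset X} (hI : a • I = I) (φ : X → A) :
    ∑ y ∈ I, φ (a • y) = ∑ y ∈ I, φ y := by
  conv_rhs => rw [← hI]
  rw [Finset.smul_finset_def, Finset.sum_image fun _ _ _ _ h => MulAction.injective a h]

lemma sum_cocycle_conj (r : G → X → A) (hr : ∀ σ τ y, r (σ * τ) y = r σ y + r τ (σ⁻¹ • y))
    (x g : G) {I : Finset X} (hI : (x⁻¹ * g * x) • I = I) :
    ∑ y ∈ I, r (x⁻¹ * g * x) y = ∑ z ∈ x • I, r g z := by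
  set s := x⁻¹ * g * x
  have hpoint (y : X) : r s y = r g (x • y) + (r x (x • s⁻¹ • y) - r x (x • y)) := by
    have h1 := hr x s (x • y)
    have h2 := hr g x (x • y)
    rw [inv_smul_smul, show x * s = g * x by simp only [s]; group, h2,
      show g⁻¹ • x • y = x • s⁻¹ • y by simp [s, smul_smul, mul_assoc]] at h1
    rw [eq_sub_of_add_eq' h1.symm]
    abel
  have hs : s⁻¹ • I = I := inv_smul_eq_iff.2 hI.symm
  rw [Finset.sum_congr rfl fun y _ => hpoint y, Finset.sum_add_distrib, Finset.sum_sub_distrib,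
    Finset.sum_comp_smul_of_smul_eq hs (fun y => r x (x • y)), sub_self, add_zero,
    Finset.smul_finset_def, Finset.sum_image fun _ _ _ _ h => MulAction.injective x h]

end Cocycle

section Parity
variable {α : Type*}

noncomputable def parity (Φ : Set α) (a : α) : ZMod 2 := if a ∈ Φ then 0 else 1

lemma parity_eq_zero_iff {Φ : Set α} {a : α} : parity Φ a = 0 ↔ a ∈ Φ := by
  unfold parity; split_ifs with h <;> simp [h]

end Parity

section CMTypes
variable {G : Type} [Group G] {H H₀ : Subgroup G} {hle : H ≤ H₀} {ι : G}

lemma proj_mk (a : G) : proj H H₀ hle (a : G ⧸ H) = (a : G ⧸ H₀) := rfl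

lemma proj_smul (g : G) (φ : G ⧸ H) : proj H H₀ hle (g • φ) = g • proj H H₀ hle φ := by
  induction φ using QuotientGroup.induction_on with
  | H a => rfl

lemma proj_surjective : Function.Surjective (proj H H₀ hle) := by
  intro y
  induction y using QuotientGroup.induction_on with
  | H a => exact ⟨a, rfl⟩

lemma proj_eq_proj_iff (hcent : ∀ g : G, g * ι = ι * g)
    (hcosets : ∀ g : G, g ∈ H₀ ↔ g ∈ H ∨ ι * g ∈ H) (φ ψ : G ⧸ H) :
    proj H H₀ hle φ = proj H H₀ hle ψ ↔ φ = ψ ∨ φ = ι • ψ := by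
  induction φ using QuotientGroup.induction_on with
  | H a =>
  induction ψ using QuotientGroup.induction_on with
  | H b =>
    have hι : ι • (b : G ⧸ H) = ((ι * b : G) : G ⧸ H) := rfl
    rw [proj_mk, proj_mk, QuotientGroup.eq, hcosets, QuotientGroup.eq, hι, QuotientGroup.eq,
      ← mul_assoc, ← mul_assoc, hcent]

lemma proj_ι_smul (hcent : ∀ g : G, g * ι = ι * g)
    (hcosets : ∀ g : G, g ∈ H₀ ↔ g ∈ H ∨ ι * g ∈ H) (φ : G ⧸ H) :
    proj H H₀ hle (ι • φ) = proj H H₀ hle φ :=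
  (proj_eq_proj_iff hcent hcosets _ _).2 (Or.inr rfl)

lemma proj_ι_pow_smul (hcent : ∀ g : G, g * ι = ι * g)
    (hcosets : ∀ g : G, g ∈ H₀ ↔ g ∈ H ∨ ι * g ∈ H) (n : ℕ) (φ : G ⧸ H) :
    proj H H₀ hle (ι ^ n • φ) = proj H H₀ hle φ := by
  induction n with
  | zero => rw [pow_zero, one_smul]
  | succ n ih => rw [pow_succ', mul_smul, proj_ι_smul hcent hcosets, ih]

lemma isCMType_iff {Φ : Set (G ⧸ H)} : IsCMType H ι Φ ↔ ∀ φ, ι • φ ∈ Φ ↔ φ ∉ Φ :=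
  ⟨fun hΦ φ => ⟨fun h hφ => hΦ.1 φ hφ h, (hΦ.2 φ).resolve_left⟩,
    fun h => ⟨fun φ hφ hιφ => (h φ).1 hιφ hφ, fun φ => or_iff_not_imp_left.2 (h φ).2⟩⟩

lemma IsCMType.smul_set_ne {Φ : Set (G ⧸ H)} (hΦ : IsCMType H ι Φ) : ι • Φ ≠ Φ := by
  intro h
  have hmem : ι • ((1 : G) : G ⧸ H) ∈ Φ ↔ ((1 : G) : G ⧸ H) ∈ Φ := by
    conv_lhs => rw [← h]
    exact Set.smul_mem_smul_set_iff
  exact iff_not_self (hmem.symm.trans (isCMType_iff.1 hΦ _))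

lemma IsCMType.smul (hcent : ∀ g : G, g * ι = ι * g) {Φ : Set (G ⧸ H)} (hΦ : IsCMType H ι Φ)
    (g : G) : IsCMType H ι (g • Φ) := by
  refine isCMType_iff.2 fun φ => ?_
  rw [Set.mem_smul_set_iff_inv_smul_mem, Set.mem_smul_set_iff_inv_smul_mem, smul_smul,
    hcent, ← smul_smul, isCMType_iff.1 hΦ]

lemma smul_ι_smul {α : Type*} [MulAction G α] (hcent : ∀ g : G, g * ι = ι * g) (g : G) (a : α) :
    g • ι • a = ι • g • a := by
  rw [smul_smul, hcent, ← smul_smul]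

lemma ι_pow_smul_ι_pow_smul {α : Type*} [MulAction G α] (hι2 : ι * ι = 1) (n : ℕ)
    (a : α) : ι ^ n • ι ^ n • a = a := by
  rw [smul_smul, ← pow_add, ← two_mul, pow_mul, sq, hι2, one_pow, one_smul]

lemma IsCMType.parity_ι_smul {Φ : Set (G ⧸ H)} (hΦ : IsCMType H ι Φ) (φ : G ⧸ H) :
    parity Φ (ι • φ) = parity Φ φ + 1 := by
  have := isCMType_iff.1 hΦ φ
  unfold parity
  by_cases hφ : φ ∈ Φ <;> simp [hφ, this, CharTwo.add_self_eq_zero]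

lemma IsCMType.parity_ι_pow_smul {Φ : Set (G ⧸ H)} (hΦ : IsCMType H ι Φ) (a : ZMod 2)
    (φ : G ⧸ H) : parity Φ (ι ^ a.val • φ) = parity Φ φ + a := by
  rcases zmod_two_eq_zero_or_eq_one a with rfl | rfl
  · simp
  · rw [ZMod.val_one, pow_one, hΦ.parity_ι_smul]

variable {Φ₀ : Set (G ⧸ H)}

lemma rPhi_proj (hcent : ∀ g : G, g * ι = ι * g) (hcosets : ∀ g : G, g ∈ H₀ ↔ g ∈ H ∨ ι * g ∈ H)
    (hΦ₀ : IsCMType H ι Φ₀) (τ : G) (ψ : G ⧸ H) :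
    rPhi H H₀ hle Φ₀ τ (proj H H₀ hle ψ) = parity Φ₀ (τ⁻¹ • ψ) + parity Φ₀ ψ := by
  have hcm := isCMType_iff.1 hΦ₀
  have key : (∃ φ ∈ Φ₀, proj H H₀ hle φ = proj H H₀ hle ψ ∧ τ⁻¹ • φ ∈ Φ₀) ↔
      (τ⁻¹ • ψ ∈ Φ₀ ↔ ψ ∈ Φ₀) := by
    simp only [proj_eq_proj_iff hcent hcosets]
    constructor
    · rintro ⟨φ, hφ, rfl | rfl, h⟩
      · exact iff_of_true h hφ
      · rw [smul_ι_smul hcent, hcm] at h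
        exact iff_of_false h ((hcm ψ).1 hφ)
    · intro h
      by_cases hψ : ψ ∈ Φ₀
      · exact ⟨ψ, hψ, Or.inl rfl, h.2 hψ⟩
      · exact ⟨ι • ψ, (hcm ψ).2 hψ, Or.inr rfl, by rw [smul_ι_smul hcent, hcm]; exact mt h.1 hψ⟩
  unfold rPhi parity
  rw [if_congr key rfl rfl]
  by_cases h1 : τ⁻¹ • ψ ∈ Φ₀ <;> by_cases h2 : ψ ∈ Φ₀ <;>
    simp [h1, h2, CharTwo.add_self_eq_zero]

lemma rPhi_mul (hcent : ∀ g : G, g * ι = ι * g) (hcosets : ∀ g : G, g ∈ H₀ ↔ g ∈ H ∨ ι * g ∈ H)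
    (hΦ₀ : IsCMType H ι Φ₀) (σ τ : G) (y : G ⧸ H₀) :
    rPhi H H₀ hle Φ₀ (σ * τ) y = rPhi H H₀ hle Φ₀ σ y + rPhi H H₀ hle Φ₀ τ (σ⁻¹ • y) := by
  obtain ⟨ψ, rfl⟩ := proj_surjective (hle := hle) y
  rw [← proj_smul, rPhi_proj hcent hcosets hΦ₀, rPhi_proj hcent hcosets hΦ₀,
    rPhi_proj hcent hcosets hΦ₀, mul_inv_rev, mul_smul]
  grind

lemma mem_PhiF (hι2 : ι * ι = 1) (hcent : ∀ g : G, g * ι = ι * g)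
    (hcosets : ∀ g : G, g ∈ H₀ ↔ g ∈ H ∨ ι * g ∈ H) (hΦ₀ : IsCMType H ι Φ₀)
    (f : G ⧸ H₀ → ZMod 2) (ψ : G ⧸ H) :
    ψ ∈ PhiF H H₀ hle ι Φ₀ f ↔ f (proj H H₀ hle ψ) = parity Φ₀ ψ := by
  constructor
  · rintro ⟨φ, hφ, rfl⟩
    rw [proj_ι_pow_smul hcent hcosets, hΦ₀.parity_ι_pow_smul, parity_eq_zero_iff.2 hφ, zero_add]
  · intro h
    refine ⟨ι ^ (parity Φ₀ ψ).val • ψ, ?_, ?_⟩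
    · rw [← parity_eq_zero_iff, hΦ₀.parity_ι_pow_smul, CharTwo.add_self_eq_zero]
    · dsimp only
      rw [proj_ι_pow_smul hcent hcosets, h, ι_pow_smul_ι_pow_smul hι2]

end CMTypes

section PhiF
variable {G : Type} [Group G] {H H₀ : Subgroup G} {hle : H ≤ H₀} {ι : G} {Φ₀ : Set (G ⧸ H)}
  (hι2 : ι * ι = 1) (hcent : ∀ g : G, g * ι = ι * g)
  (hcosets : ∀ g : G, g ∈ H₀ ↔ g ∈ H ∨ ι * g ∈ H) (hΦ₀ : IsCMType H ι Φ₀)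
include hι2 hcent hcosets hΦ₀

lemma isCMType_PhiF (f : G ⧸ H₀ → ZMod 2) : IsCMType H ι (PhiF H H₀ hle ι Φ₀ f) := by
  refine isCMType_iff.2 fun ψ => ?_
  rw [mem_PhiF hι2 hcent hcosets hΦ₀, mem_PhiF hι2 hcent hcosets hΦ₀, proj_ι_smul hcent hcosets,
    hΦ₀.parity_ι_smul]
  generalize f (proj H H₀ hle ψ) = a
  generalize parity Φ₀ ψ = b
  revert a b; decide

lemma smul_PhiF (τ : G) (f : G ⧸ H₀ → ZMod 2) :
    τ • PhiF H H₀ hle ι Φ₀ f = PhiF H H₀ hle ι Φ₀ (starAct H H₀ hle Φ₀ τ f) := by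
  ext ψ
  rw [Set.mem_smul_set_iff_inv_smul_mem, mem_PhiF hι2 hcent hcosets hΦ₀,
    mem_PhiF hι2 hcent hcosets hΦ₀, starAct, Pi.add_apply, rPhi_proj hcent hcosets hΦ₀, indAct,
    proj_smul]
  generalize f (τ⁻¹ • proj H H₀ hle ψ) = a
  generalize parity Φ₀ (τ⁻¹ • ψ) = b
  generalize parity Φ₀ ψ = c
  revert a b c; decide

lemma ι_smul_PhiF (f : G ⧸ H₀ → ZMod 2) :
    ι • PhiF H H₀ hle ι Φ₀ f = PhiF H H₀ hle ι Φ₀ (f + 1) := by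
  ext ψ
  rw [Set.mem_smul_set_iff_inv_smul_mem, inv_eq_of_mul_eq_one_right hι2,
    mem_PhiF hι2 hcent hcosets hΦ₀, mem_PhiF hι2 hcent hcosets hΦ₀, proj_ι_smul hcent hcosets,
    hΦ₀.parity_ι_smul, Pi.add_apply, Pi.one_apply]
  generalize f (proj H H₀ hle ψ) = a
  generalize parity Φ₀ ψ = b
  revert a b; decide

lemma PhiF_injective : Function.Injective (PhiF H H₀ hle ι Φ₀) := by
  intro f f' h
  funext y
  obtain ⟨ψ, rfl⟩ := proj_surjective (hle := hle) y
  have hψ := Set.ext_iff.1 h ψ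
  rw [mem_PhiF hι2 hcent hcosets hΦ₀, mem_PhiF hι2 hcent hcosets hΦ₀] at hψ
  revert hψ
  generalize f (proj H H₀ hle ψ) = a
  generalize f' (proj H H₀ hle ψ) = b
  generalize parity Φ₀ ψ = c
  revert a b c; decide

lemma exists_PhiF_eq {Ψ : Set (G ⧸ H)} (hΨ : IsCMType H ι Ψ) :
    ∃ f, PhiF H H₀ hle ι Φ₀ f = Ψ := by
  -- `parity Ψ + parity Φ₀` is `ι`-invariant, so evaluating it on any section of `proj` descends it
  let s := Function.surjInv (proj_surjective (hle := hle))
  refine ⟨fun y => parity Ψ (s y) + parity Φ₀ (s y), ?_⟩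
  ext ψ
  have hs : proj H H₀ hle (s (proj H H₀ hle ψ)) = proj H H₀ hle ψ :=
    Function.surjInv_eq proj_surjective _
  rw [mem_PhiF hι2 hcent hcosets hΦ₀, ← parity_eq_zero_iff (Φ := Ψ)]
  rcases (proj_eq_proj_iff hcent hcosets _ _).1 hs with h | h <;> simp only [h]
  · rw [add_eq_right]
  · rw [hΨ.parity_ι_smul, hΦ₀.parity_ι_smul]
    generalize parity Ψ ψ = a
    generalize parity Φ₀ ψ = b
    revert a b; decide

lemma sum_cmTypes_eq [Fintype (G ⧸ H₀)] [Fintype (Set (G ⧸ H))] (g : G) :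
    ∑ Ψ : Set (G ⧸ H) with IsCMType H ι Ψ,
        ((if g • Ψ = Ψ then (1 : ℂ) else 0) - (if g • Ψ = ι • Ψ then 1 else 0)) =
      2 * ∑ J : Finset (G ⧸ H₀) with g • J = J ∧ Odd J.card,
        signChar (∑ y ∈ J, rPhi H H₀ hle Φ₀ g y) := by
  have hinj := PhiF_injective (hle := hle) hι2 hcent hcosets hΦ₀
  rw [← sum_ite_sub_sum_ite_eq_two_mul_sum_odd, ← Finset.sum_sub_distrib]
  symm
  refine Finset.sum_nbij (PhiF H H₀ hle ι Φ₀)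
    (fun f _ => Finset.mem_filter.2 ⟨Finset.mem_univ _, isCMType_PhiF hι2 hcent hcosets hΦ₀ f⟩)
    hinj.injOn (fun Ψ hΨ => ?_) (fun f _ => ?_)
  · obtain ⟨f, hf⟩ := exists_PhiF_eq (hle := hle) hι2 hcent hcosets hΦ₀ (Finset.mem_filter.1 hΨ).2
    exact ⟨f, Finset.mem_coe.2 (Finset.mem_univ f), hf⟩
  · simp only [smul_PhiF hι2 hcent hcosets hΦ₀ g, ι_smul_PhiF hι2 hcent hcosets hΦ₀, hinj.eq_iff]
    rfl

end PhiF

section Characters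
variable {G : Type} [Group G] {H H₀ : Subgroup G} {ι : G}

lemma SPhi_smul (g : G) (Φ : Set (G ⧸ H)) : SPhi H (g • Φ) = g • SPhi H Φ := by
  ext x
  simp only [SPhi, Set.mem_smul_set_iff_inv_smul_mem, Set.mem_ofPred_eq]
  rfl

lemma SPhi_injective : Function.Injective (SPhi (G := G) H) := by
  intro Φ Ψ h
  ext φ
  induction φ using QuotientGroup.induction_on with
  | H a => exact Set.ext_iff.1 h a

lemma mem_Htilde {Φ : Set (G ⧸ H)} {σ : G} : σ ∈ Htilde H Φ ↔ σ • Φ = Φ := by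
  rw [Htilde, MulAction.mem_stabilizer_iff, ← SPhi_smul, SPhi_injective.eq_iff]

lemma card_eq_two_mul_card_stabilizer {β : Type*} [MulAction G β] [Finite G] {U : Subgroup G}
    {b : β} (hU : ∀ σ, σ ∈ U ↔ σ • b = b ∨ σ • b = ι • b) (hι : ι • b ≠ b) :
    Nat.card U = 2 * Nat.card (MulAction.stabilizer G b) := by
  set S : Set G := (MulAction.stabilizer G b : Set G)
  have hmem (σ : G) : σ ∈ ι • S ↔ σ • b = ι • b := by
    rw [Set.mem_smul_set_iff_inv_smul_mem, smul_eq_mul]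
    simp [S, mul_smul, inv_smul_eq_iff]
  have hset : (U : Set G) = S ∪ ι • S := by
    ext σ
    rw [Set.mem_union, hmem, SetLike.mem_coe, hU]
    rfl
  have hdisj : Disjoint S (ι • S) :=
    Set.disjoint_left.2 fun σ h1 h2 => hι (((hmem σ).1 h2).symm.trans h1)
  rw [← SetLike.coe_sort_coe, Nat.card_coe_set_eq, hset, Set.ncard_union_eq hdisj,
    Set.ncard_smul_set, two_mul, ← Nat.card_coe_set_eq]
  rfl

lemma sum_indChar_cmTypes_eq [Finite G] [Fintype (Set (G ⧸ H))] (hι2 : ι * ι = 1)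
    (hcent : ∀ g : G, g * ι = ι * g) (Λ : Finset (Set (G ⧸ H)))
    (hΛCM : ∀ Φ ∈ Λ, IsCMType H ι Φ)
    (hΛrep : ∀ Φ : Set (G ⧸ H), IsCMType H ι Φ → ∃ Φ' ∈ Λ, ∃ τ : G, Φ = τ • Φ')
    (hΛuniq : ∀ Φ ∈ Λ, ∀ Φ' ∈ Λ, (∃ τ : G, Φ' = τ • Φ) → Φ = Φ')
    (Ht₀ : Set (G ⧸ H) → Subgroup G)
    (hHt₀ : ∀ (Φ : Set (G ⧸ H)) (σ : G),
      σ ∈ Ht₀ Φ ↔ σ ∈ Htilde H Φ ∨ ∃ h ∈ Htilde H Φ, σ = ι * h) (g : G) :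
    ∑ Φ ∈ Λ, indChar (Ht₀ Φ) (fun u => if u ∈ Htilde H Φ then 1 else -1) g =
      2⁻¹ * ∑ Ψ : Set (G ⧸ H) with IsCMType H ι Ψ,
        ((if g • Ψ = Ψ then (1 : ℂ) else 0) - (if g • Ψ = ι • Ψ then 1 else 0)) := by
  have hmem (Φ : Set (G ⧸ H)) (σ : G) : σ ∈ Ht₀ Φ ↔ σ • Φ = Φ ∨ σ • Φ = ι • Φ := by
    rw [hHt₀, mem_Htilde]
    refine or_congr_right ⟨?_, fun h => ⟨ι * σ, ?_, ?_⟩⟩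
    · rintro ⟨h, hh, rfl⟩
      rw [mul_smul, mem_Htilde.1 hh]
    · rw [mem_Htilde, mul_smul, h, smul_smul, hι2, one_smul]
    · rw [← mul_assoc, hι2, one_mul]
  have := sum_indChar_eq_sum_filter (IsCMType H ι) Λ (fun x _ hΦ => hΦ.smul hcent x) hΛCM hΛrep
    hΛuniq Ht₀ 2 two_ne_zero
    (fun Φ hΦ => card_eq_two_mul_card_stabilizer (hmem Φ) (hΛCM Φ hΦ).smul_set_ne)
    (fun Φ u => if u ∈ Htilde H Φ then 1 else -1) g
    (fun Ψ => (if g • Ψ = Ψ then (1 : ℂ) else 0) - (if g • Ψ = ι • Ψ then 1 else 0))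
    (fun Φ hΦ x => ?_)
  · simpa using this
  · have hne := ((hΛCM Φ hΦ).smul hcent x).smul_set_ne
    simp only [hmem, mem_Htilde, conj_smul_eq_iff, smul_ι_smul hcent]
    by_cases h1 : g • x • Φ = x • Φ
    · simp [h1, hne.symm]
    · by_cases h2 : g • x • Φ = ι • x • Φ <;> simp [h1, h2, hne]

lemma sum_indChar_oddSubsets_eq [Finite G] [Fintype (G ⧸ H₀)] {hle : H ≤ H₀} {Φ₀ : Set (G ⧸ H)}
    (hcent : ∀ g : G, g * ι = ι * g) (hcosets : ∀ g : G, g ∈ H₀ ↔ g ∈ H ∨ ι * g ∈ H)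
    (hΦ₀ : IsCMType H ι Φ₀) (Jodd : Finset (Finset (G ⧸ H₀)))
    (hJodd : ∀ I ∈ Jodd, Odd I.card)
    (hJrep : ∀ I : Finset (G ⧸ H₀), Odd I.card →
      ∃ I' ∈ Jodd, ∃ τ : G, I = I'.image (fun x => τ • x))
    (hJuniq : ∀ I ∈ Jodd, ∀ I' ∈ Jodd,
      (∃ τ : G, I' = I.image (fun x => τ • x)) → I = I')
    (H₀G : Finset (G ⧸ H₀) → Subgroup G)
    (hH₀G : ∀ (I : Finset (G ⧸ H₀)) (σ : G),
      σ ∈ H₀G I ↔ I.image (fun x => σ • x) = I) (g : G) :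
    ∑ I ∈ Jodd, indChar (H₀G I)
        (fun σ => (-1 : ℂ) ^ (∑ x ∈ I, rPhi H H₀ hle Φ₀ σ x).val) g =
      ∑ J : Finset (G ⧸ H₀) with g • J = J ∧ Odd J.card,
        signChar (∑ y ∈ J, rPhi H H₀ hle Φ₀ g y) := by
  have hstab (I : Finset (G ⧸ H₀)) :
      Nat.card (H₀G I) = 1 * Nat.card (MulAction.stabilizer G I) := by
    rw [one_mul]
    congr 2
    ext σ
    exact hH₀G I σ
  have := sum_indChar_eq_sum_filter (fun J : Finset (G ⧸ H₀) => Odd J.card) Jodd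
    (fun x J hJ => (Finset.card_smul_finset x J).symm ▸ hJ) hJodd hJrep hJuniq H₀G 1 one_ne_zero
    (fun I _ => hstab I)
    (fun I σ => (-1 : ℂ) ^ (∑ x ∈ I, rPhi H H₀ hle Φ₀ σ x).val) g
    (fun J => if g • J = J then signChar (∑ y ∈ J, rPhi H H₀ hle Φ₀ g y) else 0)
    (fun I _ x => ?_)
  · rw [this, Nat.cast_one, inv_one, one_mul]
    simp only [Finset.sum_filter]
    refine Finset.sum_congr rfl fun J _ => ?_
    by_cases h1 : g • J = J <;> by_cases h2 : Odd J.card <;> simp [h1, h2]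
  · simp only [hH₀G, ← Finset.smul_finset_def, conj_smul_eq_iff]
    split_ifs with h
    · rw [sum_cocycle_conj _ (rPhi_mul hcent hcosets hΦ₀) x g ((conj_smul_eq_iff _ _ _ _).2 h)]
      rfl
    · rfl

end Characters

theorem character_identity_general
    {G : Type} [Group G] [Finite G] (H H₀ : Subgroup G) (hle : H ≤ H₀) (ι : G)
    (hι2 : ι * ι = 1) (hcent : ∀ g : G, g * ι = ι * g)
    (hcosets : ∀ g : G, g ∈ H₀ ↔ g ∈ H ∨ ι * g ∈ H)
    (Φ₀ : Set (G ⧸ H)) (hΦ₀ : IsCMType H ι Φ₀)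
    -- `Λ`: a system of representatives for the conjugacy classes of the CM-types of `K`
    (Λ : Finset (Set (G ⧸ H)))
    (hΛCM : ∀ Φ ∈ Λ, IsCMType H ι Φ)
    (hΛrep : ∀ Φ : Set (G ⧸ H), IsCMType H ι Φ → ∃ Φ' ∈ Λ, ∃ τ : G, Φ = τ • Φ')
    (hΛuniq : ∀ Φ ∈ Λ, ∀ Φ' ∈ Λ, (∃ τ : G, Φ' = τ • Φ) → Φ = Φ')
    -- `H̃₀(Φ) = H̃(Φ) ∪ ιH̃(Φ)`
    (Ht₀ : Set (G ⧸ H) → Subgroup G)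
    (hHt₀ : ∀ (Φ : Set (G ⧸ H)) (σ : G),
      σ ∈ Ht₀ Φ ↔ σ ∈ Htilde H Φ ∨ ∃ h ∈ Htilde H Φ, σ = ι * h)
    -- `J_odd`: a system of representatives for the orbits of odd-cardinality subsets of `G/H₀`
    (Jodd : Finset (Finset (G ⧸ H₀)))
    (hJodd : ∀ I ∈ Jodd, Odd I.card)
    (hJrep : ∀ I : Finset (G ⧸ H₀), Odd I.card →
      ∃ I' ∈ Jodd, ∃ τ : G, I = I'.image (fun x => τ • x))
    (hJuniq : ∀ I ∈ Jodd, ∀ I' ∈ Jodd,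
      (∃ τ : G, I' = I.image (fun x => τ • x)) → I = I')
    -- `H₀^G(I) = {σ ∈ G : ρ(σ)I = I}`
    (H₀G : Finset (G ⧸ H₀) → Subgroup G)
    (hH₀G : ∀ (I : Finset (G ⧸ H₀)) (σ : G),
      σ ∈ H₀G I ↔ I.image (fun x => σ • x) = I) :
    ∀ g : G,
      (∑ Φ ∈ Λ, indChar (Ht₀ Φ) (fun u => if u ∈ Htilde H Φ then 1 else -1) g) =
      ∑ I ∈ Jodd, indChar (H₀G I)
        (fun σ => (-1 : ℂ) ^ (∑ x ∈ I, rPhi H H₀ hle Φ₀ σ x).val) g := by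
  intro g
  have := Fintype.ofFinite (G ⧸ H₀)
  have := Fintype.ofFinite (Set (G ⧸ H))
  rw [sum_indChar_cmTypes_eq hι2 hcent Λ hΛCM hΛrep hΛuniq Ht₀ hHt₀,
    sum_cmTypes_eq hι2 hcent hcosets hΦ₀, inv_mul_cancel_left₀ two_ne_zero,
    sum_indChar_oddSubsets_eq hcent hcosets hΦ₀ Jodd hJodd hJrep hJuniq H₀G hH₀G]

/-- **Theorem: character identity.**
`∑_{Φ∈Λ} Ind_{H̃₀(Φ)}^G(χ_{H̃₀(Φ)/H̃(Φ)}) = ∑_{I∈J_odd} Ind_{H₀^G(I)}^G(χ̃_I)` as characters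
of `G`, where for `I ⊆ G/H₀` of odd cardinality, `H₀^G(I) = {σ ∈ G : ρ(σ)I = I}` and
`χ̃_I(σ) = (−1)^{∑_{φH₀∈I} r_{Φ₀}(σ)(φH₀)}` (whose kernel is `H(I)`). -/
theorem character_identity
    {G : Type} [Group G] [Finite G] (H H₀ : Subgroup G) (hle : H ≤ H₀) (ι : G)
    (hι2 : ι * ι = 1) (hι1 : ι ≠ 1) (hcent : ∀ g : G, g * ι = ι * g)
    (hιH : ι ∉ H) (hιH₀ : ι ∈ H₀)
    (hcosets : ∀ g : G, g ∈ H₀ ↔ g ∈ H ∨ ι * g ∈ H)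
    (hfaithful : H.normalCore = ⊥)
    (Φ₀ : Set (G ⧸ H)) (hΦ₀ : IsCMType H ι Φ₀)
    -- `Λ`: a system of representatives for the conjugacy classes of the CM-types of `K`
    (Λ : Finset (Set (G ⧸ H)))
    (hΛCM : ∀ Φ ∈ Λ, IsCMType H ι Φ)
    (hΛrep : ∀ Φ : Set (G ⧸ H), IsCMType H ι Φ → ∃ Φ' ∈ Λ, ∃ τ : G, Φ = τ • Φ')
    (hΛuniq : ∀ Φ ∈ Λ, ∀ Φ' ∈ Λ, (∃ τ : G, Φ' = τ • Φ) → Φ = Φ')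
    -- `H̃₀(Φ) = H̃(Φ) ∪ ιH̃(Φ)`
    (Ht₀ : Set (G ⧸ H) → Subgroup G)
    (hHt₀ : ∀ (Φ : Set (G ⧸ H)) (σ : G),
      σ ∈ Ht₀ Φ ↔ σ ∈ Htilde H Φ ∨ ∃ h ∈ Htilde H Φ, σ = ι * h)
    -- `J_odd`: a system of representatives for the orbits of odd-cardinality subsets of `G/H₀`
    (Jodd : Finset (Finset (G ⧸ H₀)))
    (hJodd : ∀ I ∈ Jodd, Odd I.card)
    (hJrep : ∀ I : Finset (G ⧸ H₀), Odd I.card →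
      ∃ I' ∈ Jodd, ∃ τ : G, I = I'.image (fun x => τ • x))
    (hJuniq : ∀ I ∈ Jodd, ∀ I' ∈ Jodd,
      (∃ τ : G, I' = I.image (fun x => τ • x)) → I = I')
    -- `H₀^G(I) = {σ ∈ G : ρ(σ)I = I}`
    (H₀G : Finset (G ⧸ H₀) → Subgroup G)
    (hH₀G : ∀ (I : Finset (G ⧸ H₀)) (σ : G),
      σ ∈ H₀G I ↔ I.image (fun x => σ • x) = I) :
    ∀ g : G,
      (∑ Φ ∈ Λ, indChar (Ht₀ Φ) (fun u => if u ∈ Htilde H Φ then 1 else -1) g) =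
      ∑ I ∈ Jodd, indChar (H₀G I)
        (fun σ => (-1 : ℂ) ^ (∑ x ∈ I, rPhi H H₀ hle Φ₀ σ x).val) g :=
  character_identity_general H H₀ hle ι hι2 hcent hcosets Φ₀ hΦ₀ Λ hΛCM hΛrep hΛuniq Ht₀ hHt₀ Jodd
    hJodd hJrep hJuniq H₀G hH₀G
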